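/- Let a < b, c ≥ 0, and suppose f : [a,b] → ℝ is continuous, strongly η-convex with modulus c, and η(u,v) ≤ M on f([a,b])². Combining both sides of the Hermite–Hadamard inequality yields: f((a+b)/2) − M/2 + (c/12)(b−a)² ≤ (1/(b−a)) ∫_a^b f(x) dx ≤ (f(a)+f(b))/2 + M/2 − (c/6)(b−a)². -/

import Mathlib

/-!
Parametrise `[a, b]` by `t ↦ a + t (b - a)`, `t ∈ [0, 1]`. For the upper bound, average the
defining inequality at `(b, a, t)` and at `(a, b, 1 - t)`: the `η`-terms combine to at most `M / 2`
and the quadratic terms to `c t (1 - t) (b - a)²`. For the lower bound, apply it with `t = 1/2` to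
the two points at parameters `t` and `1 - t`, whose midpoint is `(a + b) / 2` and whose distance
is `|1 - 2t| (b - a)`. Integrating over `t` turns `t (1 - t)` into `1/6` and `(1 - 2t)² / 4`
into `1/12`.
-/

open Set intervalIntegral

def StronglyEtaConvexOn (s : Set ℝ) (η : ℝ → ℝ → ℝ) (c : ℝ) (f : ℝ → ℝ) : Prop :=
  ∀ x ∈ s, ∀ y ∈ s, ∀ t ∈ Icc (0 : ℝ) 1,
    f (t * x + (1 - t) * y) ≤ f y + t * η (f x) (f y) - c * t * (1 - t) * (x - y) ^ 2

namespace StronglyEtaConvexOn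

variable {s : Set ℝ} {η : ℝ → ℝ → ℝ} {c M : ℝ} {f : ℝ → ℝ} {x y t : ℝ}

theorem map_midpoint_le (hf : StronglyEtaConvexOn s η c f) (hx : x ∈ s) (hy : y ∈ s)
    (hη : η (f x) (f y) ≤ M) :
    f ((x + y) / 2) ≤ f y + M / 2 - c / 4 * (x - y) ^ 2 := by
  have h := hf x hx y hy (1 / 2) ⟨by norm_num, by norm_num⟩
  rw [show 1 / 2 * x + (1 - 1 / 2) * y = (x + y) / 2 by ring] at h
  linarith

theorem map_add_mul_sub_le (hf : StronglyEtaConvexOn s η c f) (hx : x ∈ s) (hy : y ∈ s)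
    (hxy : η (f x) (f y) ≤ M) (hyx : η (f y) (f x) ≤ M) (ht : t ∈ Icc (0 : ℝ) 1) :
    f (x + t * (y - x)) ≤ (f x + f y) / 2 + M / 2 - c * (y - x) ^ 2 * (t * (1 - t)) := by
  have hy' := hf y hy x hx t ht
  have hx' := hf x hx y hy (1 - t) ⟨by linarith [ht.2], by linarith [ht.1]⟩
  rw [show t * y + (1 - t) * x = x + t * (y - x) by ring] at hy'
  rw [show (1 - t) * x + (1 - (1 - t)) * y = x + t * (y - x) by ring] at hx'
  nlinarith [mul_le_mul_of_nonneg_left hyx ht.1, mul_le_mul_of_nonneg_left hxy (sub_nonneg.2 ht.2)]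

theorem map_midpoint_le_map_add_mul_sub (hf : StronglyEtaConvexOn s η c f) (hs : Convex ℝ s)
    (hx : x ∈ s) (hy : y ∈ s) (hM : ∀ u ∈ s, ∀ v ∈ s, η (f u) (f v) ≤ M)
    (ht : t ∈ Icc (0 : ℝ) 1) :
    f ((x + y) / 2) - M / 2 + c / 4 * (y - x) ^ 2 * (1 - 2 * t) ^ 2 ≤ f (x + t * (y - x)) := by
  have hreflect : 1 - t ∈ Icc (0 : ℝ) 1 := ⟨by linarith [ht.2], by linarith [ht.1]⟩
  have hu : x + (1 - t) * (y - x) ∈ s := hs.add_smul_sub_mem hx hy hreflect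
  have hv : x + t * (y - x) ∈ s := hs.add_smul_sub_mem hx hy ht
  have h := hf.map_midpoint_le hu hv (hM _ hu _ hv)
  rw [show (x + (1 - t) * (y - x) + (x + t * (y - x))) / 2 = (x + y) / 2 by ring,
    show (x + (1 - t) * (y - x) - (x + t * (y - x))) ^ 2 = (y - x) ^ 2 * (1 - 2 * t) ^ 2 by ring]
    at h
  linarith

end StronglyEtaConvexOn

theorem integral_unitInterval_comp_add_mul_sub (f : ℝ → ℝ) {a b : ℝ} (hab : a ≠ b) :
    ∫ t in (0 : ℝ)..1, f (a + t * (b - a)) = (b - a)⁻¹ * ∫ x in a..b, f x := by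
  simpa [mul_comm] using integral_comp_add_mul f (a := 0) (b := 1) (sub_ne_zero.2 hab.symm) a

theorem integral_one_sub_two_mul_sq : ∫ t in (0 : ℝ)..1, (1 - 2 * t) ^ 2 = 1 / 3 := by
  rw [integral_comp_sub_mul (fun x => x ^ 2) two_ne_zero]
  norm_num

theorem integral_mul_one_sub : ∫ t in (0 : ℝ)..1, t * (1 - t) = 1 / 6 := by
  simp_rw [mul_sub, mul_one, ← sq]
  rw [integral_sub intervalIntegrable_id (intervalIntegrable_pow 2)]
  norm_num

theorem stmt_19_general (a b c M : ℝ) (hab : a < b)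
    (f : ℝ → ℝ) (η : ℝ → ℝ → ℝ)
    (hcont : ContinuousOn f (Set.Icc a b))
    (hf : ∀ x ∈ Set.Icc a b, ∀ y ∈ Set.Icc a b, ∀ t ∈ Set.Icc (0:ℝ) 1,
      f (t * x + (1 - t) * y) ≤ f y + t * η (f x) (f y) - c * t * (1 - t) * (x - y)^2)
    (hM : ∀ u ∈ f '' Set.Icc a b, ∀ v ∈ f '' Set.Icc a b, η u v ≤ M) :
    f ((a + b) / 2) - M / 2 + (c / 12) * (b - a)^2 ≤ (1 / (b - a)) * ∫ x in a..b, f x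
    ∧ (1 / (b - a)) * ∫ x in a..b, f x ≤ (f a + f b) / 2 + M / 2 - (c / 6) * (b - a)^2 := by
  have hconv : StronglyEtaConvexOn (Icc a b) η c f := hf
  have ha : a ∈ Icc a b := left_mem_Icc.2 hab.le
  have hb : b ∈ Icc a b := right_mem_Icc.2 hab.le
  have hη : ∀ u ∈ Icc a b, ∀ v ∈ Icc a b, η (f u) (f v) ≤ M := fun u hu v hv =>
    hM _ (mem_image_of_mem f hu) _ (mem_image_of_mem f hv)
  have hg : IntervalIntegrable (fun t => f (a + t * (b - a))) MeasureTheory.volume 0 1 := by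
    refine ContinuousOn.intervalIntegrable ?_
    rw [uIcc_of_le zero_le_one]
    exact hcont.comp (by fun_prop) fun t ht => (convex_Icc a b).add_smul_sub_mem ha hb ht
  rw [one_div, ← integral_unitInterval_comp_add_mul_sub f hab.ne]
  constructor
  · calc f ((a + b) / 2) - M / 2 + c / 12 * (b - a) ^ 2
        = ∫ t in (0 : ℝ)..1, (f ((a + b) / 2) - M / 2 + c / 4 * (b - a) ^ 2 * (1 - 2 * t) ^ 2) := by
          rw [integral_add (by simp) (Continuous.intervalIntegrable (by fun_prop) _ _),
            integral_const_mul, integral_one_sub_two_mul_sq]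
          simp only [integral_const, sub_zero, smul_eq_mul, one_mul]
          ring
      _ ≤ _ := integral_mono_on zero_le_one (Continuous.intervalIntegrable (by fun_prop) _ _) hg
          fun t ht => hconv.map_midpoint_le_map_add_mul_sub (convex_Icc a b) ha hb hη ht
  · calc _ ≤ ∫ t in (0 : ℝ)..1, ((f a + f b) / 2 + M / 2 - c * (b - a) ^ 2 * (t * (1 - t))) :=
          integral_mono_on zero_le_one hg (Continuous.intervalIntegrable (by fun_prop) _ _)
            fun t ht => hconv.map_add_mul_sub_le ha hb (hη a ha b hb) (hη b hb a ha) ht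
      _ = _ := by
          rw [integral_sub (by simp) (Continuous.intervalIntegrable (by fun_prop) _ _),
            integral_const_mul, integral_mul_one_sub]
          simp only [integral_const, sub_zero, smul_eq_mul, one_mul]
          ring

theorem stmt_19 (a b c M : ℝ) (hab : a < b) (hc : 0 ≤ c)
    (f : ℝ → ℝ) (η : ℝ → ℝ → ℝ)
    (hcont : ContinuousOn f (Set.Icc a b))
    (hf : ∀ x ∈ Set.Icc a b, ∀ y ∈ Set.Icc a b, ∀ t ∈ Set.Icc (0:ℝ) 1,
      f (t * x + (1 - t) * y) ≤ f y + t * η (f x) (f y) - c * t * (1 - t) * (x - y)^2)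
    (hM : ∀ u ∈ f '' Set.Icc a b, ∀ v ∈ f '' Set.Icc a b, η u v ≤ M) :
    f ((a + b) / 2) - M / 2 + (c / 12) * (b - a)^2 ≤ (1 / (b - a)) * ∫ x in a..b, f x
    ∧ (1 / (b - a)) * ∫ x in a..b, f x ≤ (f a + f b) / 2 + M / 2 - (c / 6) * (b - a)^2 :=
  stmt_19_general a b c M hab f η hcont hf hM
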